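/- With the setup below, let N_{μ,τ} be an admissible Gaussian and let J ∈ {I₁,…,I_s} be an associated interval for it, i.e., |J ∩ L(N_{μ,τ})| ≥ 1/(8sτ) and τ ≤ φ/|J|. Define the rescaled precision τ̃ = (|J|/2)·τ and the rescaled mean μ̃ = τ·(μ − mid(J)), where mid(J) is the midpoint of J. Then √(2π)·ω/(16s) ≤ τ̃ ≤ φ/2 and μ̃ ∈ [−4sφ/ω, 4sφ/ω]. -/

import Mathlib

open MeasureTheory

/-- The Gaussian pdf with mean `μ` and precision `τ`. -/
noncomputable def gaussPdf (μ τ x : ℝ) : ℝ :=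
  τ / Real.sqrt (2 * Real.pi) * Real.exp (-(τ ^ 2 * (x - μ) ^ 2) / 2)

/-- The standard Gaussian pdf. -/
noncomputable def stdGauss (x : ℝ) : ℝ := gaussPdf 0 1 x

/-!
The lower bound on `τ̃` comes from `|J| ≥ |J ∩ L| ≥ 1/(8sτ)` together with
`√(2π)·ω = exp(-z²/2) ≤ 1`; the upper bound is `τ ≤ φ/|J|`. For the mean, a point `x` of
`J ∩ L` (nonempty, having positive length) lies within `z/τ` of `μ` and within `|J|/2` of
`mid(J)`, so `|μ̃| ≤ z + τ|J|/2 ≤ z + φ/2`, and `z·ω ≤ 1/2` because `z ≤ exp(z²/2)`.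
-/

open Real Set

lemma sqrt_two_pi_mul_stdGauss (z : ℝ) : √(2 * π) * stdGauss z = exp (-(z ^ 2) / 2) := by
  have : √(2 * π) ≠ 0 := (sqrt_pos.2 (by positivity)).ne'
  simp only [stdGauss, gaussPdf]
  field_simp
  rw [sub_zero]

lemma two_le_sqrt_two_pi : 2 ≤ √(2 * π) :=
  le_sqrt_of_sq_le (by nlinarith [pi_gt_three])

lemma stdGauss_pos (z : ℝ) : 0 < stdGauss z := by
  simp only [stdGauss, gaussPdf]
  positivity

lemma sqrt_two_pi_mul_stdGauss_le_one (z : ℝ) : √(2 * π) * stdGauss z ≤ 1 := by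
  rw [sqrt_two_pi_mul_stdGauss, exp_le_one_iff]
  nlinarith [sq_nonneg z]

lemma stdGauss_le_half (z : ℝ) : stdGauss z ≤ 1 / 2 := by
  nlinarith [sqrt_two_pi_mul_stdGauss_le_one z, two_le_sqrt_two_pi, stdGauss_pos z]

lemma mul_stdGauss_le_half (z : ℝ) : z * stdGauss z ≤ 1 / 2 := by
  have hz_le_exp : z ≤ exp (z ^ 2 / 2) := by
    nlinarith [add_one_le_exp (z ^ 2 / 2), sq_nonneg (z - 1)]
  have hexp : exp (-(z ^ 2) / 2) * exp (z ^ 2 / 2) = 1 := by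
    rw [← exp_add, neg_div, neg_add_cancel, exp_zero]
  have hsqrt : √(2 * π) * (z * stdGauss z) ≤ 1 := by
    rw [mul_left_comm, sqrt_two_pi_mul_stdGauss]
    calc z * exp (-(z ^ 2) / 2) ≤ exp (z ^ 2 / 2) * exp (-(z ^ 2) / 2) :=
          mul_le_mul_of_nonneg_right hz_le_exp (exp_pos _).le
      _ = 1 := by rw [mul_comm, hexp]
  by_cases hz : z ≤ 0
  · nlinarith [stdGauss_pos z]
  · nlinarith [two_le_sqrt_two_pi, stdGauss_pos z]

lemma one_le_phi {ω ε : ℝ} (hω : 0 < ω) (hω1 : ω ≤ 1) (hε : 0 < ε) (hε1 : ε ≤ 1)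
    {k : ℕ} (hk : 1 ≤ k) (m : ℕ) :
    1 ≤ 32 * (k : ℝ) / (ω * ε) * ((m : ℝ) + 1) ^ 3 * (√2 + 1) ^ m := by
  have hk' : (1 : ℝ) ≤ k := by exact_mod_cast hk
  have hωε : 1 ≤ 32 * (k : ℝ) / (ω * ε) := by
    rw [le_div_iff₀ (by positivity)]
    nlinarith [mul_le_one₀ hω1 hε.le hε1]
  have hm : (1 : ℝ) ≤ ((m : ℝ) + 1) ^ 3 := one_le_pow₀ (by linarith [m.cast_nonneg (α := ℝ)])
  have hsqrt : (1 : ℝ) ≤ (√2 + 1) ^ m := one_le_pow₀ (by linarith [sqrt_nonneg 2])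
  exact one_le_mul_of_one_le_of_one_le (one_le_mul_of_one_le_of_one_le hωε hm) hsqrt

lemma toReal_volume_Icc_inter_le {a b : ℝ} (hab : a ≤ b) (S : Set ℝ) :
    (volume (Icc a b ∩ S)).toReal ≤ b - a := by
  apply ENNReal.toReal_le_of_le_ofReal (sub_nonneg.2 hab)
  rw [← Real.volume_Icc]
  exact measure_mono inter_subset_left

lemma abs_mul_sub_midpoint_le {a b μ τ z x : ℝ} (hτ : 0 < τ) (hx : x ∈ Icc a b)
    (hxμ : x ∈ Icc (μ - z / τ) (μ + z / τ)) :
    |τ * (μ - (a + b) / 2)| ≤ z + τ * (b - a) / 2 := by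
  have hμx : |μ - x| ≤ z / τ := abs_sub_le_iff.2 ⟨by linarith [hxμ.1], by linarith [hxμ.2]⟩
  have hxmid : |x - (a + b) / 2| ≤ (b - a) / 2 :=
    abs_sub_le_iff.2 ⟨by linarith [hx.2], by linarith [hx.1]⟩
  calc |τ * (μ - (a + b) / 2)| = τ * |(μ - x) + (x - (a + b) / 2)| := by
        rw [abs_mul, abs_of_pos hτ, sub_add_sub_cancel]
    _ ≤ τ * (z / τ + (b - a) / 2) :=
        mul_le_mul_of_nonneg_left ((abs_add_le _ _).trans (add_le_add hμx hxmid)) hτ.le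
    _ = z + τ * (b - a) / 2 := by field_simp

theorem stmt14_general
    -- z* and ω from the setup
    (z ω : ℝ)
    (hω : ω = stdGauss z)
    -- intervals I₁, …, I_s partitioning [-1, 1]
    (s : ℕ) (hs : 1 ≤ s) (c : Fin (s + 1) → ℝ) (hc : StrictMono c)
    -- the remaining scalar parameters and φ
    (m : ℕ) (ε : ℝ) (hε : 0 < ε) (hε1 : ε ≤ 1) (k : ℕ) (hk : 1 ≤ k)
    (φ : ℝ)
    (hφ : φ = 32 * (k : ℝ) / (ω * ε) * ((m : ℝ) + 1) ^ 3 * (Real.sqrt 2 + 1) ^ m)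
    -- an admissible Gaussian N_{μ,τ} with associated interval J = I_ℓ
    (μ τ : ℝ) (hτ : 0 < τ)
    (ℓ : Fin s)
    (hoverlap : (volume (Set.Icc (c ℓ.castSucc) (c ℓ.succ) ∩
        Set.Icc (μ - z / τ) (μ + z / τ))).toReal ≥ 1 / (8 * (s : ℝ) * τ))
    (hτφ : τ ≤ φ / (c ℓ.succ - c ℓ.castSucc)) :
    -- bounds on the rescaled precision τ̃ = (|J|/2)·τ and rescaled mean μ̃ = τ·(μ − mid(J))
    Real.sqrt (2 * Real.pi) * ω / (16 * (s : ℝ)) ≤ (c ℓ.succ - c ℓ.castSucc) / 2 * τ ∧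
    (c ℓ.succ - c ℓ.castSucc) / 2 * τ ≤ φ / 2 ∧
    τ * (μ - (c ℓ.castSucc + c ℓ.succ) / 2)
      ∈ Set.Icc (-(4 * (s : ℝ) * φ / ω)) (4 * (s : ℝ) * φ / ω) := by
  set a := c ℓ.castSucc
  set b := c ℓ.succ
  have hab : a < b := hc ℓ.castSucc_lt_succ
  have hs' : (1 : ℝ) ≤ s := by exact_mod_cast hs
  have hωpos : 0 < ω := hω ▸ stdGauss_pos z
  have hωhalf : ω ≤ 1 / 2 := hω ▸ stdGauss_le_half z
  have hφ1 : 1 ≤ φ := hφ ▸ one_le_phi hωpos (by linarith) hε hε1 hk m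
  have hlen : 1 / (8 * (s : ℝ) * τ) ≤ b - a := hoverlap.trans (toReal_volume_Icc_inter_le hab.le _)
  have hlenτ : τ * (b - a) ≤ φ := (le_div_iff₀ (sub_pos.2 hab)).1 hτφ
  obtain ⟨x, hxJ, hxL⟩ := nonempty_of_measure_ne_zero fun h0 => by
    rw [h0, ENNReal.toReal_zero] at hoverlap
    exact (not_le.2 (by positivity)) hoverlap
  refine ⟨?_, by linarith, ?_⟩
  · calc √(2 * π) * ω / (16 * (s : ℝ)) ≤ 1 / (16 * s) := by
          gcongr
          exact hω ▸ sqrt_two_pi_mul_stdGauss_le_one z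
      _ ≤ (b - a) / 2 * τ := by
          rw [div_le_iff₀ (by positivity)] at hlen ⊢
          linarith
  · rw [mem_Icc, ← abs_le]
    calc |τ * (μ - (a + b) / 2)| ≤ z + τ * (b - a) / 2 := abs_mul_sub_midpoint_le hτ hxJ hxL
      _ ≤ 4 * s * φ / ω := by
          rw [le_div_iff₀ hωpos]
          nlinarith [hω ▸ mul_stdGauss_le_half z, mul_le_mul_of_nonneg_right hlenτ hωpos.le]

/-- Bounds on the rescaled mean and precision of an admissible Gaussian with respect to an
associated interval `J = I_ℓ = [c ℓ.castSucc, c ℓ.succ]`.  The intervals `I₁, …, I_s`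
partitioning `[-1, 1]` are given by consecutive breakpoints `c 0 = -1 < ⋯ < c s = 1`. -/
theorem stmt14
    -- z* and ω from the setup
    (z ω : ℝ) (hz : 0 < z) (hzmass : (∫ x in (-z)..z, stdGauss x) = 55 / 56)
    (hω : ω = stdGauss z)
    -- intervals I₁, …, I_s partitioning [-1, 1]
    (s : ℕ) (hs : 1 ≤ s) (c : Fin (s + 1) → ℝ) (hc : StrictMono c)
    (hc0 : c 0 = -1) (hclast : c (Fin.last s) = 1)
    -- the remaining scalar parameters and φ
    (m : ℕ) (hm : 1 ≤ m) (ε : ℝ) (hε : 0 < ε) (hε1 : ε ≤ 1) (k : ℕ) (hk : 1 ≤ k)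
    (φ : ℝ)
    (hφ : φ = 32 * (k : ℝ) / (ω * ε) * ((m : ℝ) + 1) ^ 3 * (Real.sqrt 2 + 1) ^ m)
    -- an admissible Gaussian N_{μ,τ} with associated interval J = I_ℓ
    (μ τ : ℝ) (hτ : 0 < τ)
    (hmass : (∫ x in (-1 : ℝ)..1, gaussPdf μ τ x) ≥ 1 / 2)
    (ℓ : Fin s)
    (hoverlap : (volume (Set.Icc (c ℓ.castSucc) (c ℓ.succ) ∩
        Set.Icc (μ - z / τ) (μ + z / τ))).toReal ≥ 1 / (8 * (s : ℝ) * τ))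
    (hτφ : τ ≤ φ / (c ℓ.succ - c ℓ.castSucc)) :
    -- bounds on the rescaled precision τ̃ = (|J|/2)·τ and rescaled mean μ̃ = τ·(μ − mid(J))
    Real.sqrt (2 * Real.pi) * ω / (16 * (s : ℝ)) ≤ (c ℓ.succ - c ℓ.castSucc) / 2 * τ ∧
    (c ℓ.succ - c ℓ.castSucc) / 2 * τ ≤ φ / 2 ∧
    τ * (μ - (c ℓ.castSucc + c ℓ.succ) / 2)
      ∈ Set.Icc (-(4 * (s : ℝ) * φ / ω)) (4 * (s : ℝ) * φ / ω) :=
  stmt14_general z ω hω s hs c hc m ε hε hε1 k hk φ hφ μ τ hτ ℓ hoverlap hτφ
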